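/- arXiv:0710.5062 — 3 statements merged into one kernel-verified Lean document; each statement's English description precedes it below -/
import Mathlib

section
/- Let (R,E) be an e-ring with directed group G such that there is an element ½ ∈ E with ½ + ½ = 1 and G has the commutative Vigier property. Then: (i) for every a ∈ G with 0 ≤ a, the descending sequence ((½)ⁿa)_{n∈ℕ} has infimum 0 in G; and (ii) G is archimedean, i.e., whenever g,h ∈ G and n·g ≤ h for all n ∈ ℕ, it follows that g ≤ 0. -/
/-- An e-ring `(R,E)`: an associative ring `R` with unity together with a set `E ⊆ R`
of effects, satisfying the Foulis axioms.  `E⁺` is realized as the additive submonoid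
closure of `E` (the set of all finite sums of effects). -/
structure ERing (R : Type*) [Ring R] where
  E : Set R
  zero_mem : (0 : R) ∈ E
  one_mem : (1 : R) ∈ E
  compl_mem : ∀ e ∈ E, 1 - e ∈ E
  epos_i : ∀ a ∈ AddSubmonoid.closure E, -a ∈ AddSubmonoid.closure E → a = 0
  epos_ii : ∀ a ∈ AddSubmonoid.closure E, 1 - a ∈ AddSubmonoid.closure E → a ∈ E
  epos_iii : ∀ a ∈ AddSubmonoid.closure E, ∀ b ∈ AddSubmonoid.closure E,
    a * b = b * a → a * b ∈ AddSubmonoid.closure E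
  epos_iv : ∀ a ∈ AddSubmonoid.closure E, ∀ b ∈ AddSubmonoid.closure E,
    a * b * a ∈ AddSubmonoid.closure E
  epos_v : ∀ a ∈ AddSubmonoid.closure E, ∀ b ∈ AddSubmonoid.closure E,
    a * b * a = 0 → a * b = 0 ∧ b * a = 0
  epos_vi : ∀ a ∈ AddSubmonoid.closure E, ∀ b ∈ AddSubmonoid.closure E,
    (a - b) ^ 2 ∈ AddSubmonoid.closure E
  zero_ne_one : (0 : R) ≠ 1

namespace ERing

variable {R : Type*} [Ring R] (er : ERing R)

/-- `E⁺`, the set of all finite sums of effects; the positive cone of the directed group. -/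
def Epos : Set R := (AddSubmonoid.closure er.E : Set R)

/-- The directed group `G = E⁺ - E⁺` of the e-ring. -/
def G : Set R := {g | ∃ a ∈ er.Epos, ∃ b ∈ er.Epos, g = a - b}

/-- The partial order on the directed group: `g ≤ h` iff `h - g ∈ E⁺`. -/
def le (g h : R) : Prop := h - g ∈ er.Epos

/-- The set of projections `P = {p ∈ G : p = p²}`. -/
def P : Set R := {p | p ∈ er.G ∧ p = p ^ 2}

/-- The commutant in `G` of a subset `A ⊆ G`. -/
def commutant (A : Set R) : Set R := {g | g ∈ er.G ∧ ∀ a ∈ A, g * a = a * g}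

/-- The bicommutant in `G` of a subset `A ⊆ G`. -/
def CC (A : Set R) : Set R := er.commutant (er.commutant A)

/-- `s` is the supremum of `A` within the subset `S` (w.r.t. the e-ring order). -/
def IsSupIn (S A : Set R) (s : R) : Prop :=
  s ∈ S ∧ (∀ a ∈ A, er.le a s) ∧ ∀ b ∈ S, (∀ a ∈ A, er.le a b) → er.le s b

/-- `s` is the infimum of `A` within the subset `S` (w.r.t. the e-ring order). -/
def IsInfIn (S A : Set R) (s : R) : Prop :=
  s ∈ S ∧ (∀ a ∈ A, er.le s a) ∧ ∀ b ∈ S, (∀ a ∈ A, er.le b a) → er.le b s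

/-- Quadratic annihilation property. -/
def HasQA : Prop := ∀ g ∈ er.G, ∀ h ∈ er.G, g * h ^ 2 * g = 0 → g * h = 0 ∧ h * g = 0

/-- Commutative Vigier property: every ascending sequence of pairwise commuting elements
of `G` bounded above in `G` has a supremum in `G` which double commutes with the sequence. -/
def HasCV : Prop :=
  ∀ g : ℕ → R, (∀ n, g n ∈ er.G) → (∀ n, er.le (g n) (g (n + 1))) →
    (∀ m n, g m * g n = g n * g m) → (∃ b ∈ er.G, ∀ n, er.le (g n) b) →
    ∃ s, er.IsSupIn er.G (Set.range g) s ∧ s ∈ er.CC (Set.range g)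

/-- `G` is an abstract Hermitian (AH) algebra: there is a semitransparent effect `½`,
`G` has quadratic annihilation, and `G` has the commutative Vigier property. -/
def IsAH : Prop := (∃ h ∈ er.E, h + h = 1) ∧ er.HasQA ∧ er.HasCV

end ERing

/-- If `(R,E)` is an e-ring whose directed group `G` contains a
semitransparent effect `½` and has the commutative Vigier property, then (i) for
every `0 ≤ a ∈ G` the descending sequence `((½)ⁿ a)` has infimum `0` in `G`, and
(ii) `G` is archimedean. -/
theorem stmt0 {R : Type*} [Ring R] (er : ERing R)
    (half : R) (hhalfE : half ∈ er.E) (hhalf : half + half = 1)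
    (hCV : er.HasCV) :
    (∀ a ∈ er.G, er.le 0 a →
      er.IsInfIn er.G (Set.range fun n : ℕ => half ^ (n + 1) * a) 0) ∧
    (∀ g ∈ er.G, ∀ h ∈ er.G, (∀ n : ℕ, er.le ((n + 1) • g) h) → er.le g 0) := by
  set M := AddSubmonoid.closure er.E with hMdef
  have le_def : ∀ g h : R, er.le g h ↔ h - g ∈ M := fun _ _ => Iff.rfl
  have hhalfM : half ∈ M := AddSubmonoid.subset_closure hhalfE
  -- half * x + half * x = x
  have e2 : ∀ x : R, half * x + half * x = x := fun x => by
    rw [← add_mul, hhalf, one_mul]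
  have e2' : ∀ x : R, x * half + x * half = x := fun x => by
    rw [← mul_add, hhalf, mul_one]
  -- cancellation of doubling
  have hcancel2 : ∀ z : R, z + z = 0 → z = 0 := by
    intro z hz
    have h1 : half * (z + z) = z := by rw [mul_add, e2]
    rw [hz, mul_zero] at h1
    exact h1.symm
  -- half is central
  have hcent : ∀ x : R, half * x = x * half := by
    intro x
    have h1 : (half * x - x * half) + (half * x - x * half) = 0 := by
      rw [sub_add_sub_comm, e2, e2', sub_self]
    exact sub_eq_zero.mp (hcancel2 _ h1)
  have hc : ∀ x : R, Commute half x := hcent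
  have hmulM : ∀ x ∈ M, half * x ∈ M := fun x hx =>
    er.epos_iii half hhalfM x hx (hcent x)
  have hpowM : ∀ (n : ℕ), ∀ x ∈ M, half ^ n * x ∈ M := by
    intro n
    induction n with
    | zero => intro x hx; simpa using hx
    | succ k ih =>
      intro x hx
      rw [pow_succ, mul_assoc]
      exact ih _ (hmulM x hx)
  -- membership in G
  have hMG : ∀ x ∈ M, x ∈ er.G := fun x hx =>
    ⟨x, hx, 0, M.zero_mem, (sub_zero x).symm⟩
  have hGsub : ∀ x ∈ er.G, ∀ y ∈ er.G, x - y ∈ er.G := by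
    rintro x ⟨p, hp, q, hq, rfl⟩ y ⟨u, hu, v, hv, rfl⟩
    exact ⟨p + v, M.add_mem hp hv, q + u, M.add_mem hq hu, by abel⟩
  have h0G : (0 : R) ∈ er.G := hMG 0 M.zero_mem
  -- half * (2 • x) = x
  have half2 : ∀ x : R, half * ((2 : ℕ) • x) = x := by
    intro x
    rw [two_nsmul, mul_add, e2]
  have halfpow2 : ∀ (k : ℕ) (x : R), half ^ k * ((2 ^ k : ℕ) • x) = x := by
    intro k
    induction k with
    | zero => intro x; simp
    | succ n ih =>
      intro x
      rw [pow_succ, mul_assoc, pow_succ, mul_smul, mul_smul_comm, half2, ih]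
  -- Part (i)
  have part1 : ∀ a ∈ er.G, er.le 0 a →
      er.IsInfIn er.G (Set.range fun n : ℕ => half ^ (n + 1) * a) 0 := by
    intro a haG ha0
    have haM : a ∈ M := by simpa using (le_def 0 a).mp ha0
    refine ⟨h0G, ?_, ?_⟩
    · rintro x ⟨n, rfl⟩
      exact (le_def _ _).mpr (by simpa using hpowM (n + 1) a haM)
    · rintro b hbG hb
      -- the ascending sequence gₙ = a - half^(n+1) a
      set gseq : ℕ → R := fun n => a - half ^ (n + 1) * a with hgdef
      have grepr : ∀ k, gseq k = (1 - half ^ (k + 1)) * a := fun k => by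
        simp [gseq, sub_mul]
      have hGseq : ∀ n, gseq n ∈ er.G :=
        fun n => hGsub a (hMG a haM) _ (hMG _ (hpowM (n + 1) a haM))
      have hasc : ∀ n, er.le (gseq n) (gseq (n + 1)) := by
        intro n
        refine (le_def _ _).mpr ?_
        have h1 : (1 - half) * a ∈ M :=
          er.epos_iii _ (AddSubmonoid.subset_closure (er.compl_mem half hhalfE))
            a haM (((Commute.one_left a).sub_left (hc a)))
        have h2 : gseq (n + 1) - gseq n = half ^ (n + 1) * ((1 - half) * a) := by
          simp only [gseq]
          rw [sub_mul, one_mul, mul_sub, ← mul_assoc, ← pow_succ]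
          abel
        rw [h2]
        exact hpowM (n + 1) _ h1
      have hcomm : ∀ m n, gseq m * gseq n = gseq n * gseq m := by
        intro m n
        rw [grepr m, grepr n]
        have cm : ∀ x : R, Commute (1 - half ^ (m + 1)) x := fun x =>
          (Commute.one_left x).sub_left ((hc x).pow_left (m + 1))
        have cn : ∀ x : R, Commute (1 - half ^ (n + 1)) x := fun x =>
          (Commute.one_left x).sub_left ((hc x).pow_left (n + 1))
        exact ((cm _).mul_left (((cn a).symm).mul_right (Commute.refl a)))
      have hbdd : ∃ c ∈ er.G, ∀ n, er.le (gseq n) c := by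
        refine ⟨a, haG, fun n => (le_def _ _).mpr ?_⟩
        have : a - gseq n = half ^ (n + 1) * a := by simp [gseq]
        rw [this]; exact hpowM (n + 1) a haM
      obtain ⟨s, ⟨hsG, hsub, hsleast⟩, -⟩ := hCV gseq hGseq hasc hcomm hbdd
      -- s ≤ a
      have hasM : a - s ∈ M := by
        refine (le_def _ _).mp (hsleast a haG ?_)
        rintro x ⟨n, rfl⟩
        refine (le_def _ _).mpr ?_
        have : a - gseq n = half ^ (n + 1) * a := by simp [gseq]
        rw [this]; exact hpowM (n + 1) a haM
      -- s ≤ 2s - a, i.e. s - a ∈ M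
      have hsaM : s - a ∈ M := by
        have hub : ∀ x ∈ Set.range gseq, er.le x (s - (a - s)) := by
          rintro x ⟨n, rfl⟩
          refine (le_def _ _).mpr ?_
          have h1 : s - gseq (n + 1) ∈ M := (le_def _ _).mp (hsub _ ⟨n + 1, rfl⟩)
          have h2 : gseq (n + 1) = half * gseq n + half * a := by
            simp only [gseq]
            rw [mul_sub, ← mul_assoc, ← pow_succ']
            have := e2 a
            calc a - half ^ (n + 1 + 1) * a
                = (half * a + half * a) - half ^ (n + 1 + 1) * a := by rw [e2]
              _ = half * a - half ^ (n + 1 + 1) * a + half * a := by abel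
          have key : s - (a - s) - gseq n
              = (s - gseq (n + 1)) + (s - gseq (n + 1)) := by
            rw [h2]
            have h3 : half * gseq n + half * gseq n = gseq n := e2 _
            have h4 : half * a + half * a = a := e2 _
            calc s - (a - s) - gseq n
                = s + s - ((half * gseq n + half * gseq n)
                    + (half * a + half * a)) := by rw [h3, h4]; abel
              _ = (s - (half * gseq n + half * a))
                    + (s - (half * gseq n + half * a)) := by abel
          rw [key]
          exact M.add_mem h1 h1
        have := (le_def _ _).mp
          (hsleast (s - (a - s)) (hGsub s hsG _ (hGsub a haG s hsG)) hub)
        have h5 : s - (a - s) - s = s - a := by abel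
        rwa [h5] at this
      have hsa : s = a := by
        have h6 : a - s = 0 :=
          er.epos_i (a - s) hasM (by rw [neg_sub]; exact hsaM)
        exact (sub_eq_zero.mp h6).symm
      -- conclude b ≤ 0
      have hub : ∀ x ∈ Set.range gseq, er.le x (a - b) := by
        rintro x ⟨n, rfl⟩
        refine (le_def _ _).mpr ?_
        have h7 : half ^ (n + 1) * a - b ∈ M :=
          (le_def _ _).mp (hb _ ⟨n, rfl⟩)
        have h8 : (a - b) - gseq n = half ^ (n + 1) * a - b := by
          simp only [gseq]; abel
        rwa [h8]
      have hfin := (le_def _ _).mp (hsleast (a - b) (hGsub a haG b hbG) hub)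
      refine (le_def _ _).mpr ?_
      have h9 : (0 : R) - b = a - b - s := by rw [hsa]; abel
      rwa [h9]
  refine ⟨part1, ?_⟩
  -- Part (ii): archimedean
  intro g hgG h hhG hle
  have haM : h - g ∈ M := by
    have := (le_def _ _).mp (hle 0)
    simpa using this
  set a : R := h - g with hadef
  have hnsmul : ∀ n : ℕ, a - n • g ∈ M := by
    intro n
    have := (le_def _ _).mp (hle n)
    have h1 : h - (n + 1) • g = a - n • g := by
      rw [hadef, succ_nsmul]; abel
    rwa [h1] at this
  have hlow : ∀ n : ℕ, er.le g (half ^ (n + 1) * a) := by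
    intro n
    refine (le_def _ _).mpr ?_
    have h1 : half ^ (n + 1) * (a - (2 ^ (n + 1) : ℕ) • g) ∈ M :=
      hpowM (n + 1) _ (hnsmul (2 ^ (n + 1)))
    have h2 : half ^ (n + 1) * (a - (2 ^ (n + 1) : ℕ) • g)
        = half ^ (n + 1) * a - g := by
      rw [mul_sub, halfpow2]
    rwa [h2] at h1
  have haG : a ∈ er.G := hGsub h hhG g hgG
  have ha0 : er.le 0 a := (le_def _ _).mpr (by simpa using haM)
  exact (part1 a haG ha0).2.2 g hgG (by rintro x ⟨n, rfl⟩; exact hlow n)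
end

section
/- Let (R,E) be an e-ring with directed group G and projections P. Suppose ∅ ≠ Q ⊆ P and Q has a supremum (respectively, an infimum) p in the partially ordered group G. Then p ∈ P, and p is the supremum (respectively, the infimum) of Q in the partially ordered set P. -/
namespace ERing
variable {R : Type*} [Ring R] (er : ERing R)

lemma aux_mem_G_of_Epos {a : R} (ha : a ∈ er.Epos) : a ∈ er.G :=
  ⟨a, ha, 0, (AddSubmonoid.closure er.E).zero_mem, by abel⟩

lemma aux_one_mem_Epos : (1:R) ∈ er.Epos := AddSubmonoid.subset_closure er.one_mem

lemma aux_sq_mem_Epos {g : R} (hg : g ∈ er.G) : g ^ 2 ∈ er.Epos := by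
  obtain ⟨a, ha, b, hb, rfl⟩ := hg
  exact er.epos_vi a ha b hb

lemma aux_proj_mem_Epos {q : R} (hq : q ∈ er.P) : q ∈ er.Epos := by
  rw [hq.2]; exact er.aux_sq_mem_Epos hq.1

lemma aux_one_sub_proj_sq {q : R} (hq : q = q ^ 2) : 1 - q = (1 - q) ^ 2 := by
  have e : (1 - q) ^ 2 = 1 - q - q + q ^ 2 := by noncomm_ring
  rw [e, ← hq]; abel

lemma aux_one_sub_proj_mem_Epos {q : R} (hq : q ∈ er.P) : 1 - q ∈ er.Epos := by
  have h := er.epos_vi 1 er.aux_one_mem_Epos q (er.aux_proj_mem_Epos hq)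
  rwa [← aux_one_sub_proj_sq hq.2] at h

lemma aux_sub_mem_G {g h : R} (hg : g ∈ er.G) (hh : h ∈ er.G) : g - h ∈ er.G := by
  obtain ⟨a, ha, b, hb, rfl⟩ := hg
  obtain ⟨c, hc, d, hd, rfl⟩ := hh
  exact ⟨a + d, add_mem ha hd, b + c, add_mem hb hc, by abel⟩

lemma aux_sup_case (Q : Set R) (hQne : Q.Nonempty) (hQP : Q ⊆ er.P) (p : R)
    (hsup : er.IsSupIn er.G Q p) : p ∈ er.P ∧ er.IsSupIn er.P Q p := by
  obtain ⟨pG, hub, hlub⟩ := hsup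
  obtain ⟨q0, hq0⟩ := hQne
  have h1G : (1:R) ∈ er.G := er.aux_mem_G_of_Epos er.aux_one_mem_Epos
  have hp1 : 1 - p ∈ er.Epos :=
    hlub 1 h1G (fun q hq => by
      show 1 - q ∈ er.Epos
      exact er.aux_one_sub_proj_mem_Epos (hQP hq))
  have hpE : p ∈ er.Epos := by
    have h1 : p - q0 ∈ er.Epos := hub q0 hq0
    have h2 : q0 ∈ er.Epos := er.aux_proj_mem_Epos (hQP hq0)
    have h3 : (p - q0) + q0 ∈ er.Epos := add_mem h1 h2
    simpa using h3
  have hcomm : ∀ q ∈ Q, p * q = q ∧ q * p = q := by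
    intro q hq
    have hqE := er.aux_proj_mem_Epos (hQP hq)
    have hq2 := (hQP hq).2
    have hqq : q * q = q := by rw [← pow_two, ← hq2]
    have h1 : q * (p - q) * q ∈ er.Epos := er.epos_iv q hqE _ (hub q hq)
    have h2 : q * (1 - p) * q ∈ er.Epos := er.epos_iv q hqE _ hp1
    have e1 : q * (p - q) * q = q * p * q - q := by
      have e : q * (p - q) * q = q * p * q - q * q * q := by noncomm_ring
      rw [e, hqq, hqq]
    have e2 : q * (1 - p) * q = -(q * p * q - q) := by
      have e : q * (1 - p) * q = q * q - q * p * q := by noncomm_ring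
      rw [e, hqq]; abel
    have hz : q * p * q - q = 0 :=
      er.epos_i _ (by rwa [e1] at h1) (by rwa [e2] at h2)
    have hz' : q * (1 - p) * q = 0 := by rw [e2, hz, neg_zero]
    obtain ⟨ha, hb⟩ := er.epos_v q hqE (1 - p) hp1 hz'
    constructor
    · have e : (1 - p) * q = q - p * q := by noncomm_ring
      rw [e] at hb
      exact (sub_eq_zero.mp hb).symm
    · have e : q * (1 - p) = q - q * p := by noncomm_ring
      rw [e] at ha
      exact (sub_eq_zero.mp ha).symm
  have hsqE : p ^ 2 ∈ er.Epos := by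
    have hpp : p * p ∈ er.Epos := er.epos_iii p hpE p hpE rfl
    rwa [pow_two]
  have hp2 : p = p ^ 2 := by
    have hle : p ^ 2 - p ∈ er.Epos := by
      refine hlub (p ^ 2) (er.aux_mem_G_of_Epos hsqE) ?_
      intro q hq
      show p ^ 2 - q ∈ er.Epos
      obtain ⟨hpq, hqp⟩ := hcomm q hq
      have hqq : q * q = q := by rw [← pow_two, ← (hQP hq).2]
      have h := er.epos_vi p hpE q (er.aux_proj_mem_Epos (hQP hq))
      have e : (p - q) ^ 2 = p ^ 2 - q := by
        have e0 : (p - q) ^ 2 = p * p - p * q - q * p + q * q := by noncomm_ring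
        rw [e0, hpq, hqp, hqq, pow_two]; abel
      rwa [e] at h
    have hge : -(p ^ 2 - p) ∈ er.Epos := by
      have h := er.epos_iii p hpE (1 - p) hp1 (by noncomm_ring)
      have e : p * (1 - p) = -(p ^ 2 - p) := by noncomm_ring
      rwa [e] at h
    exact (sub_eq_zero.mp (er.epos_i _ hle hge)).symm
  have hpP : p ∈ er.P := ⟨er.aux_mem_G_of_Epos hpE, hp2⟩
  exact ⟨hpP, hpP, hub, fun b hb h => hlub b hb.1 h⟩

end ERing

/-- If `∅ ≠ Q ⊆ P` has a supremum (resp. infimum) `p` in `G`, then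
`p ∈ P` and `p` is the supremum (resp. infimum) of `Q` in `P`. -/
theorem stmt1 {R : Type*} [Ring R] (er : ERing R)
    (Q : Set R) (hQne : Q.Nonempty) (hQP : Q ⊆ er.P) (p : R) :
    (er.IsSupIn er.G Q p → p ∈ er.P ∧ er.IsSupIn er.P Q p) ∧
    (er.IsInfIn er.G Q p → p ∈ er.P ∧ er.IsInfIn er.P Q p) := by
  constructor
  · exact er.aux_sup_case Q hQne hQP p
  · intro hinf
    obtain ⟨pG, hlb, hglb⟩ := hinf
    have h1G : (1:R) ∈ er.G := er.aux_mem_G_of_Epos er.aux_one_mem_Epos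
    set Q' := (fun q => 1 - q) '' Q with hQ'
    have hQ'ne : Q'.Nonempty := hQne.image _
    have hQ'P : Q' ⊆ er.P := by
      rintro _ ⟨q, hq, rfl⟩
      exact ⟨er.aux_sub_mem_G h1G (hQP hq).1, ERing.aux_one_sub_proj_sq (hQP hq).2⟩
    have hsup : er.IsSupIn er.G Q' (1 - p) := by
      refine ⟨er.aux_sub_mem_G h1G pG, ?_, ?_⟩
      · rintro _ ⟨q, hq, rfl⟩
        show (1 - p) - (1 - q) ∈ er.Epos
        have h := hlb q hq
        have e : (1 - p) - (1 - q) = q - p := by abel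
        rwa [e]
      · intro b hb hbu
        show b - (1 - p) ∈ er.Epos
        have h1b : 1 - b ∈ er.G := er.aux_sub_mem_G h1G hb
        have h := hglb (1 - b) h1b (fun q hq => by
          show q - (1 - b) ∈ er.Epos
          have h' := hbu (1 - q) ⟨q, hq, rfl⟩
          have e : q - (1 - b) = b - (1 - q) := by abel
          rwa [e])
        have e : b - (1 - p) = p - (1 - b) := by abel
        rwa [e]
    obtain ⟨hP', _⟩ := er.aux_sup_case Q' hQ'ne hQ'P (1 - p) hsup
    have hp2 : p = p ^ 2 := by
      have h := hP'.2
      have e : p - p ^ 2 = (1 - p) - (1 - p - p + p ^ 2) := by abel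
      have e2 : (1 - p) ^ 2 = 1 - p - p + p ^ 2 := by noncomm_ring
      rw [← e2, ← h, sub_self] at e
      exact sub_eq_zero.mp e
    have hpP : p ∈ er.P := ⟨pG, hp2⟩
    exact ⟨hpP, hpP, hlb, fun b hb h => hglb b hb.1 h⟩
end

section
/- Let G be an AH-algebra with set of projections P. Then every ascending sequence p₁ ≤ p₂ ≤ ⋯ of projections in P has a supremum p in G, this supremum satisfies p ∈ P, and p is the supremum of the sequence in the partially ordered set P. -/
namespace ERing

variable {R : Type*} [Ring R] (er : ERing R)

lemma zero_mem_Epos : (0 : R) ∈ er.Epos := (AddSubmonoid.closure er.E).zero_mem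

lemma one_mem_Epos : (1 : R) ∈ er.Epos := AddSubmonoid.subset_closure er.one_mem

lemma add_mem_Epos {a b : R} (ha : a ∈ er.Epos) (hb : b ∈ er.Epos) : a + b ∈ er.Epos :=
  (AddSubmonoid.closure er.E).add_mem ha hb

lemma idem_mem_Epos {q : R} (hq : q ∈ er.G) (h2 : q = q ^ 2) : q ∈ er.Epos := by
  obtain ⟨a, ha, b, hb, rfl⟩ := hq
  have h := er.epos_vi a ha b hb
  rw [h2]; exact h

lemma proj_mem_Epos {q : R} (h : q ∈ er.P) : q ∈ er.Epos := er.idem_mem_Epos h.1 h.2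

lemma one_sub_proj_mem_Epos {q : R} (h : q ∈ er.P) : 1 - q ∈ er.Epos := by
  apply er.idem_mem_Epos ⟨1, er.one_mem_Epos, q, er.proj_mem_Epos h, rfl⟩
  have hqq : q * q = q := by rw [← sq, ← h.2]
  simp only [sq, sub_mul, mul_sub, one_mul, mul_one, hqq]
  abel

/-- Key lemma: if `p` is an idempotent in `E⁺` with `p ≤ s ≤ 1`, then `p*s = s*p = p`. -/
lemma key (p s : R) (hpE : p ∈ er.Epos) (hp2 : p = p ^ 2)
    (h1 : s - p ∈ er.Epos) (h2 : 1 - s ∈ er.Epos) : p * s = p ∧ s * p = p := by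
  have hA := er.epos_iv p hpE (s - p) h1
  have hB := er.epos_iv p hpE (1 - s) h2
  have hpp : p * p = p := by rw [← sq, ← hp2]
  have hid : p * (s - p) * p = -(p * (1 - s) * p) := by
    simp only [mul_sub, sub_mul, mul_one, one_mul, hpp, neg_sub]
  have hneg : -(p * (1 - s) * p) ∈ AddSubmonoid.closure er.E := hid ▸ hA
  have h0 : p * (1 - s) * p = 0 := er.epos_i _ hB hneg
  have hv := er.epos_v p hpE (1 - s) h2 h0
  have e1 := hv.1
  have e2 := hv.2
  rw [mul_sub, mul_one, sub_eq_zero] at e1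
  rw [sub_mul, one_mul, sub_eq_zero] at e2
  exact ⟨e1.symm, e2.symm⟩

end ERing

/-- In an AH-algebra, every ascending sequence of projections has a
supremum `p` in `G`, which lies in `P` and is also the supremum of the sequence in `P`. -/
theorem stmt7 {R : Type*} [Ring R] (er : ERing R) (hAH : er.IsAH)
    (p : ℕ → R) (hp : ∀ n, p n ∈ er.P) (hmono : ∀ n, er.le (p n) (p (n + 1))) :
    ∃ s, er.IsSupIn er.G (Set.range p) s ∧ s ∈ er.P ∧
      er.IsSupIn er.P (Set.range p) s := by
  obtain ⟨-, -, hCV⟩ := hAH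
  -- the chain is monotone in the order
  have hle : ∀ m n, m ≤ n → er.le (p m) (p n) := by
    intro m n h
    refine Nat.le_induction ?_ ?_ n h
    · show p m - p m ∈ er.Epos
      simpa using er.zero_mem_Epos
    · intro k _ ih
      show p (k + 1) - p m ∈ er.Epos
      have e : p (k + 1) - p m = (p k - p m) + (p (k + 1) - p k) := by abel
      rw [e]; exact er.add_mem_Epos ih (hmono k)
  -- the chain commutes pairwise
  have habs : ∀ m n, m ≤ n → p m * p n = p m ∧ p n * p m = p m := by
    intro m n hmn
    exact er.key _ _ (er.proj_mem_Epos (hp m)) (hp m).2 (hle m n hmn)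
      (er.one_sub_proj_mem_Epos (hp n))
  have hcomm : ∀ m n, p m * p n = p n * p m := by
    intro m n
    rcases le_total m n with hmn | hnm
    · rw [(habs m n hmn).1, (habs m n hmn).2]
    · rw [(habs n m hnm).1, (habs n m hnm).2]
  -- bounded above by 1
  have h1G : (1 : R) ∈ er.G := ⟨1, er.one_mem_Epos, 0, er.zero_mem_Epos, (sub_zero 1).symm⟩
  have hbound : ∃ b ∈ er.G, ∀ n, er.le (p n) b :=
    ⟨1, h1G, fun n => er.one_sub_proj_mem_Epos (hp n)⟩
  obtain ⟨s, hsup, hcc⟩ := hCV p (fun n => (hp n).1) hmono hcomm hbound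
  -- s commutes with each p n
  have hscomm : ∀ n, s * p n = p n * s := by
    intro n
    refine hcc.2 (p n) ⟨(hp n).1, ?_⟩
    rintro a ⟨m, rfl⟩
    exact hcomm n m
  -- s ≤ 1 and s ∈ E⁺
  have hs1 : er.le s 1 := by
    refine hsup.2.2 1 h1G ?_
    rintro a ⟨n, rfl⟩
    exact er.one_sub_proj_mem_Epos (hp n)
  have hsE : s ∈ er.Epos := by
    have h0 : s - p 0 ∈ er.Epos := hsup.2.1 (p 0) ⟨0, rfl⟩
    have h := er.add_mem_Epos (er.proj_mem_Epos (hp 0)) h0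
    have e : s = p 0 + (s - p 0) := by abel
    rw [e]; exact h
  -- p n * s = p n
  have hps : ∀ n, p n * s = p n ∧ s * p n = p n := fun n =>
    er.key _ _ (er.proj_mem_Epos (hp n)) (hp n).2 (hsup.2.1 (p n) ⟨n, rfl⟩) hs1
  -- s * s is an upper bound in G
  have hs2E : s * s ∈ er.Epos := er.epos_iii s hsE s hsE rfl
  have hs2G : s * s ∈ er.G := ⟨s * s, hs2E, 0, er.zero_mem_Epos, (sub_zero _).symm⟩
  have hs2ub : ∀ a ∈ Set.range p, er.le a (s * s) := by
    rintro a ⟨n, rfl⟩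
    show s * s - p n ∈ er.Epos
    have e : s * s - p n = (s - p n) * s := by rw [sub_mul, (hps n).1]
    rw [e]
    exact er.epos_iii _ (hsup.2.1 (p n) ⟨n, rfl⟩) _ hsE
      (by rw [sub_mul, mul_sub, hscomm n])
  have hle1 : er.le s (s * s) := hsup.2.2 _ hs2G hs2ub
  -- s² ≤ s
  have hle2 : s * (1 - s) ∈ er.Epos := er.epos_iii s hsE (1 - s) hs1 (by rw [mul_sub, sub_mul, mul_one, one_mul])
  have hzero : s * s - s = 0 := by
    refine er.epos_i _ hle1 ?_
    have e : -(s * s - s) = s * (1 - s) := by rw [mul_sub, mul_one, neg_sub]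
    rw [e]; exact hle2
  have hproj : s = s ^ 2 := by rw [sq]; exact (sub_eq_zero.mp hzero).symm
  have hsP : s ∈ er.P := ⟨hsup.1, hproj⟩
  exact ⟨s, hsup, hsP, hsP, hsup.2.1, fun b hb hub => hsup.2.2 b hb.1 hub⟩
end
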